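/- arXiv:2404.04694 — 3 statements merged into one kernel-verified Lean document; each statement's English description precedes it below -/
import Mathlib

section
/- For measurable functions f and g on a σ-finite measure space, the maximal nonincreasing rearrangement satisfies (f+g)**(t) ≤ f**(t) + g**(t) for all t > 0. -/
open MeasureTheory Set
open scoped ENNReal

/-- The nonincreasing rearrangement `f*(t) = inf {λ > 0 : μ{|f| > λ} ≤ t}`. -/
noncomputable def rearr {α : Type*} [MeasurableSpace α] (μ : Measure α) (f : α → ℝ) (t : ℝ) :
    ℝ≥0∞ :=
  sInf {l : ℝ≥0∞ | μ {x | l < ENNReal.ofReal |f x|} ≤ ENNReal.ofReal t}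

/-- The maximal nonincreasing rearrangement `f**(t) = (1/t) ∫₀ᵗ f*(s) ds`. -/
noncomputable def maxRearr {α : Type*} [MeasurableSpace α] (μ : Measure α) (f : α → ℝ) (t : ℝ) :
    ℝ≥0∞ :=
  (∫⁻ s in Set.Ioo (0 : ℝ) t, rearr μ f s) / ENNReal.ofReal t

lemma vol_ofReal_lt (a : ℝ≥0∞) :
    volume {u : ℝ | u ∈ Ioi (0:ℝ) ∧ ENNReal.ofReal u < a} = a := by
  rcases eq_or_ne a ∞ with rfl | ha
  · have : {u : ℝ | u ∈ Ioi (0:ℝ) ∧ ENNReal.ofReal u < ∞} = Ioi (0:ℝ) := by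
      ext u; simp [ENNReal.ofReal_lt_top]
    rw [this, Real.volume_Ioi]
  · have : {u : ℝ | u ∈ Ioi (0:ℝ) ∧ ENNReal.ofReal u < a} = Ioo 0 a.toReal := by
      ext u
      simp only [mem_Ioi, mem_setOf_eq, mem_Ioo]
      constructor
      · rintro ⟨hu, h⟩
        exact ⟨hu, (ENNReal.ofReal_lt_iff_lt_toReal hu.le ha).1 h⟩
      · rintro ⟨hu, h⟩
        exact ⟨hu, (ENNReal.ofReal_lt_iff_lt_toReal hu.le ha).2 h⟩
    rw [this, Real.volume_Ioo, sub_zero, ENNReal.ofReal_toReal ha]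

/-- Layer cake formula for `ℝ≥0∞`-valued functions. -/
lemma layercake {β : Type*} [MeasurableSpace β] (ν : Measure β) [SigmaFinite ν]
    {h : β → ℝ≥0∞} (hm : Measurable h) :
    ∫⁻ x, h x ∂ν = ∫⁻ u in Ioi (0:ℝ), ν {x | ENNReal.ofReal u < h x} := by
  have key : ∀ x, h x = ∫⁻ u in Ioi (0:ℝ),
      Set.indicator {u : ℝ | ENNReal.ofReal u < h x} (fun _ => 1) u := by
    intro x
    symm
    rw [lintegral_indicator (by
      exact measurableSet_lt (ENNReal.measurable_ofReal) measurable_const)]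
    rw [setLIntegral_one]
    rw [Measure.restrict_apply' measurableSet_Ioi]
    rw [show {u : ℝ | ENNReal.ofReal u < h x} ∩ Ioi 0
        = {u : ℝ | u ∈ Ioi (0:ℝ) ∧ ENNReal.ofReal u < h x} by ext u; simp [and_comm]]
    exact vol_ofReal_lt (h x)
  calc ∫⁻ x, h x ∂ν
      = ∫⁻ x, (∫⁻ u in Ioi (0:ℝ),
        Set.indicator {u : ℝ | ENNReal.ofReal u < h x} (fun _ => 1) u) ∂ν := by
        exact lintegral_congr key
    _ = ∫⁻ u in Ioi (0:ℝ), (∫⁻ x,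
        Set.indicator {u : ℝ | ENNReal.ofReal u < h x} (fun _ => 1) u ∂ν) := by
        apply lintegral_lintegral_swap
        apply Measurable.aemeasurable
        have : (Function.uncurry fun x u =>
            Set.indicator {u : ℝ | ENNReal.ofReal u < h x} (fun _ => (1:ℝ≥0∞)) u)
            = Set.indicator {p : β × ℝ | ENNReal.ofReal p.2 < h p.1} (fun _ => 1) := by
          ext p
          by_cases hp : ENNReal.ofReal p.2 < h p.1
          · simp [Function.uncurry, Set.indicator_of_mem, hp]
          · simp [Function.uncurry, Set.indicator_of_notMem, hp]
        rw [this]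
        exact (measurable_const.indicator
          (measurableSet_lt (ENNReal.measurable_ofReal.comp measurable_snd)
            (hm.comp measurable_fst)))
    _ = ∫⁻ u in Ioi (0:ℝ), ν {x | ENNReal.ofReal u < h x} := by
        apply setLIntegral_congr_fun measurableSet_Ioi
        intro u _
        beta_reduce
        have : ∀ x, Set.indicator {u' : ℝ | ENNReal.ofReal u' < h x} (fun _ => (1:ℝ≥0∞)) u
            = Set.indicator {x | ENNReal.ofReal u < h x} (fun _ => (1:ℝ≥0∞)) x := by
          intro x
          by_cases hx : ENNReal.ofReal u < h x
          · simp [Set.indicator_of_mem, hx]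
          · simp [Set.indicator_of_notMem, hx]
        rw [lintegral_congr this,
          lintegral_indicator (measurableSet_lt measurable_const hm), setLIntegral_one]

lemma rearr_antitone {α : Type*} [MeasurableSpace α] (μ : Measure α) (f : α → ℝ) :
    Antitone (rearr μ f) := by
  intro s s' hss'
  apply sInf_le_sInf
  intro l hl
  exact le_trans hl (ENNReal.ofReal_le_ofReal hss')

lemma lt_rearr_iff {α : Type*} [MeasurableSpace α] (μ : Measure α) (f : α → ℝ)
    (s : ℝ) (l : ℝ≥0∞) :
    l < rearr μ f s ↔ ENNReal.ofReal s < μ {x | l < ENNReal.ofReal |f x|} := by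
  constructor
  · intro h
    by_contra hc
    push_neg at hc
    exact absurd h (not_lt.2 (sInf_le hc))
  · intro hd
    have hl : l ≠ ∞ := by
      rintro rfl
      have : {x | (∞:ℝ≥0∞) < ENNReal.ofReal |f x|} = ∅ := by
        ext x; simp [not_top_lt]
      rw [this, measure_empty] at hd
      exact absurd hd (not_lt.2 zero_le)
    set A : ℕ → Set α := fun n => {x | l + ((n:ℝ≥0∞))⁻¹ < ENNReal.ofReal |f x|} with hA
    have hU : {x | l < ENNReal.ofReal |f x|} = ⋃ n, A n := by
      ext x
      simp only [mem_setOf_eq, mem_iUnion, hA]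
      constructor
      · intro hx
        have hpos : (0:ℝ≥0∞) < ENNReal.ofReal |f x| - l := tsub_pos_of_lt hx
        obtain ⟨n, hn⟩ := ENNReal.exists_inv_nat_lt hpos.ne'
        refine ⟨n, ?_⟩
        calc l + ((n:ℝ≥0∞))⁻¹ < l + (ENNReal.ofReal |f x| - l) :=
              ENNReal.add_lt_add_left hl hn
          _ = ENNReal.ofReal |f x| := add_tsub_cancel_of_le hx.le
      · rintro ⟨n, hn⟩
        exact lt_of_le_of_lt le_self_add hn
    have hmono : ∀ {n m : ℕ}, n ≤ m → A n ⊆ A m := by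
      intro n m hnm x hx
      have hc : (n:ℝ≥0∞) ≤ (m:ℝ≥0∞) := Nat.cast_le.2 hnm
      simp only [hA, mem_setOf_eq] at hx ⊢
      refine lt_of_le_of_lt ?_ hx
      exact add_le_add le_rfl (ENNReal.inv_le_inv.2 hc)
    have hdir : Directed (· ⊆ ·) A :=
      fun n m => ⟨max n m, hmono (le_max_left _ _), hmono (le_max_right _ _)⟩
    rw [hU, hdir.measure_iUnion] at hd
    obtain ⟨n, hn⟩ := lt_iSup_iff.1 hd
    have hle : l + ((n:ℝ≥0∞))⁻¹ ≤ rearr μ f s := by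
      apply le_sInf
      intro m hm
      by_contra hc
      push_neg at hc
      have : A n ⊆ {x | m < ENNReal.ofReal |f x|} := fun x hx => lt_of_le_of_lt hc.le hx
      exact absurd (le_trans (measure_mono this) hm) (not_le.2 hn)
    exact lt_of_lt_of_le
      (ENNReal.lt_add_right hl (ENNReal.inv_ne_zero.2 (ENNReal.natCast_ne_top n))) hle

lemma vol_rearr_gt {α : Type*} [MeasurableSpace α] (μ : Measure α) (f : α → ℝ) (l : ℝ≥0∞) :
    volume {s : ℝ | s ∈ Ioi (0:ℝ) ∧ l < rearr μ f s} = μ {x | l < ENNReal.ofReal |f x|} := by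
  have : {s : ℝ | s ∈ Ioi (0:ℝ) ∧ l < rearr μ f s}
      = {s : ℝ | s ∈ Ioi (0:ℝ) ∧ ENNReal.ofReal s < μ {x | l < ENNReal.ofReal |f x|}} := by
    ext s
    simp only [mem_setOf_eq, lt_rearr_iff]
  rw [this, vol_ofReal_lt]

lemma equi_integral {α : Type*} [MeasurableSpace α] (μ : Measure α) [SigmaFinite μ]
    (f : α → ℝ) (hf : Measurable f) (l : ℝ≥0∞) :
    ∫⁻ s in Ioi (0:ℝ), (rearr μ f s - l) = ∫⁻ x, (ENNReal.ofReal |f x| - l) ∂μ := by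
  rw [layercake (volume.restrict (Ioi (0:ℝ))) (h := fun s => rearr μ f s - l)
      (((rearr_antitone μ f).measurable).sub measurable_const),
    layercake μ (h := fun x => ENNReal.ofReal |f x| - l) ((hf.abs.ennreal_ofReal).sub measurable_const)]
  apply setLIntegral_congr_fun measurableSet_Ioi
  intro u hu
  beta_reduce
  rw [Measure.restrict_apply' measurableSet_Ioi]
  have h1 : {s : ℝ | ENNReal.ofReal u < rearr μ f s - l} ∩ Ioi 0
      = {s : ℝ | s ∈ Ioi (0:ℝ) ∧ l + ENNReal.ofReal u < rearr μ f s} := by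
    ext s; simp only [mem_inter_iff, mem_setOf_eq, lt_tsub_iff_left, and_comm]
  have h2 : {x | ENNReal.ofReal u < ENNReal.ofReal |f x| - l}
      = {x | l + ENNReal.ofReal u < ENNReal.ofReal |f x|} := by
    ext x; simp only [mem_setOf_eq, lt_tsub_iff_left]
  rw [h1, h2, vol_rearr_gt]

/-- `(f+g)**(t) ≤ f**(t) + g**(t)` for all `t > 0`. -/
theorem maxRearr_add_le {α : Type*} [MeasurableSpace α] (μ : Measure α) [SigmaFinite μ]
    (f g : α → ℝ) (hf : Measurable f) (hg : Measurable g) (t : ℝ) (ht : 0 < t) :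
    maxRearr μ (f + g) t ≤ maxRearr μ f t + maxRearr μ g t := by
  set c := ENNReal.ofReal t with hc
  have hvol : volume (Ioo (0:ℝ) t) = c := by rw [Real.volume_Ioo, sub_zero]
  set lf := rearr μ f t with hlf
  set lg := rearr μ g t with hlg
  -- lower bound for each individual function
  have key : ∀ (h : α → ℝ), Measurable h →
      rearr μ h t * c + ∫⁻ x, (ENNReal.ofReal |h x| - rearr μ h t) ∂μ
        ≤ ∫⁻ s in Ioo (0:ℝ) t, rearr μ h s := by
    intro h hm
    set l := rearr μ h t with hl
    have hsplit : (∫⁻ x, (ENNReal.ofReal |h x| - l) ∂μ)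
        ≤ ∫⁻ s in Ioo (0:ℝ) t, (rearr μ h s - l) := by
      rw [← equi_integral μ h hm l]
      have hsub : Ioi (0:ℝ) = Ioo 0 t ∪ Ici t := by
        ext s
        simp only [mem_Ioi, mem_union, mem_Ioo, mem_Ici]
        constructor
        · intro hs
          rcases lt_or_ge s t with h' | h'
          · exact Or.inl ⟨hs, h'⟩
          · exact Or.inr h'
        · rintro (⟨hs, _⟩ | hs)
          · exact hs
          · exact lt_of_lt_of_le ht hs
      have hdisj : Disjoint (Ioo (0:ℝ) t) (Ici t) :=
        Set.disjoint_left.2 fun s hs hs' => absurd hs.2 (not_lt.2 hs')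
      rw [hsub, lintegral_union measurableSet_Ici hdisj]
      have hzero : (∫⁻ s in Ici t, (rearr μ h s - l)) = 0 := by
        have : ∀ s ∈ Ici t, rearr μ h s - l = (0 : ℝ≥0∞) := fun s hs =>
          tsub_eq_zero_of_le (rearr_antitone μ h hs)
        rw [setLIntegral_congr_fun measurableSet_Ici
          this, lintegral_zero]
      rw [hzero, add_zero]
    calc l * c + ∫⁻ x, (ENNReal.ofReal |h x| - l) ∂μ
        ≤ l * c + ∫⁻ s in Ioo (0:ℝ) t, (rearr μ h s - l) := add_le_add le_rfl hsplit
      _ = ∫⁻ s in Ioo (0:ℝ) t, (l + (rearr μ h s - l)) := by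
          rw [lintegral_add_left measurable_const, setLIntegral_const, hvol]
      _ = ∫⁻ s in Ioo (0:ℝ) t, rearr μ h s := by
          apply setLIntegral_congr_fun measurableSet_Ioo
          intro s hs
          exact add_tsub_cancel_of_le (rearr_antitone μ h hs.2.le)
  -- upper bound for the sum
  have upper : (∫⁻ s in Ioo (0:ℝ) t, rearr μ (f + g) s)
      ≤ (lf + lg) * c + ∫⁻ x, (ENNReal.ofReal |f x + g x| - (lf + lg)) ∂μ := by
    calc (∫⁻ s in Ioo (0:ℝ) t, rearr μ (f + g) s)
        ≤ ∫⁻ s in Ioo (0:ℝ) t, ((lf + lg) + (rearr μ (f + g) s - (lf + lg))) :=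
          lintegral_mono fun s => le_add_tsub
      _ = (lf + lg) * c + ∫⁻ s in Ioo (0:ℝ) t, (rearr μ (f + g) s - (lf + lg)) := by
          rw [lintegral_add_left measurable_const, setLIntegral_const, hvol]
      _ ≤ (lf + lg) * c + ∫⁻ s in Ioi (0:ℝ), (rearr μ (f + g) s - (lf + lg)) :=
          add_le_add le_rfl (lintegral_mono_set (Ioo_subset_Ioi_self))
      _ = (lf + lg) * c + ∫⁻ x, (ENNReal.ofReal |f x + g x| - (lf + lg)) ∂μ := by
          rw [equi_integral μ (f + g) (hf.add hg)]
          rfl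
  -- pointwise subadditivity
  have hpt : ∀ x, (ENNReal.ofReal |f x + g x| - (lf + lg))
      ≤ (ENNReal.ofReal |f x| - lf) + (ENNReal.ofReal |g x| - lg) := by
    intro x
    calc ENNReal.ofReal |f x + g x| - (lf + lg)
        ≤ (ENNReal.ofReal |f x| + ENNReal.ofReal |g x|) - (lf + lg) := by
          apply tsub_le_tsub_right
          calc ENNReal.ofReal |f x + g x| ≤ ENNReal.ofReal (|f x| + |g x|) :=
                ENNReal.ofReal_le_ofReal (abs_add_le _ _)
            _ ≤ ENNReal.ofReal |f x| + ENNReal.ofReal |g x| := ENNReal.ofReal_add_le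
      _ ≤ (ENNReal.ofReal |f x| - lf) + (ENNReal.ofReal |g x| - lg) :=
          add_tsub_add_le_tsub_add_tsub
  have main : (∫⁻ s in Ioo (0:ℝ) t, rearr μ (f + g) s)
      ≤ (∫⁻ s in Ioo (0:ℝ) t, rearr μ f s) + ∫⁻ s in Ioo (0:ℝ) t, rearr μ g s := by
    calc (∫⁻ s in Ioo (0:ℝ) t, rearr μ (f + g) s)
        ≤ (lf + lg) * c + ∫⁻ x, (ENNReal.ofReal |f x + g x| - (lf + lg)) ∂μ := upper
      _ ≤ (lf + lg) * c + ∫⁻ x, ((ENNReal.ofReal |f x| - lf)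
            + (ENNReal.ofReal |g x| - lg)) ∂μ :=
          add_le_add le_rfl (lintegral_mono fun x => hpt x)
      _ = (lf * c + ∫⁻ x, (ENNReal.ofReal |f x| - lf) ∂μ)
            + (lg * c + ∫⁻ x, (ENNReal.ofReal |g x| - lg) ∂μ) := by
          rw [lintegral_add_left (f := fun x => ENNReal.ofReal |f x| - lf) ((hf.abs.ennreal_ofReal).sub measurable_const), add_mul]
          ring
      _ ≤ (∫⁻ s in Ioo (0:ℝ) t, rearr μ f s) + ∫⁻ s in Ioo (0:ℝ) t, rearr μ g s :=
          add_le_add (key f hf) (key g hg)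
  calc maxRearr μ (f + g) t
      = (∫⁻ s in Ioo (0:ℝ) t, rearr μ (f + g) s) / c := rfl
    _ ≤ ((∫⁻ s in Ioo (0:ℝ) t, rearr μ f s) + ∫⁻ s in Ioo (0:ℝ) t, rearr μ g s) / c :=
        ENNReal.div_le_div_right main c
    _ = maxRearr μ f t + maxRearr μ g t := (ENNReal.div_add_div_same).symm
end

section
/- For any N ∈ ℕ and any measurable functions f₁, ..., f_N with pairwise disjoint supports, the nonincreasing rearrangement of their sum satisfies (Σⱼ fⱼ)*(N t) ≥ min_{j=1,...,N} fⱼ*(t) for every t > 0. -/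
open MeasureTheory Set
open scoped ENNReal

/-! Take a level `l` with `μ{|∑ⱼ fⱼ| > l} ≤ N t`. On the support of `fⱼ` the sum equals `fⱼ`, so
the sets `{|fⱼ| > l}` are disjoint pieces of `{|∑ⱼ fⱼ| > l}`; their measures add up to at most
`N t`, and by pigeonhole one of them has measure at most `t`, whence `min_j fⱼ*(t) ≤ l`. -/

theorem Finset.sum_apply_eq_of_mem_support {ι α M : Type*} [Fintype ι] [AddCommMonoid M]
    {f : ι → α → M} (hdisj : Pairwise fun i j => Disjoint (f i).support (f j).support)
    {j : ι} {x : α} (hx : x ∈ (f j).support) : ∑ i, f i x = f j x :=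
  Finset.sum_eq_single_of_mem j (Finset.mem_univ j) fun _ _ hij =>
    Function.notMem_support.mp fun hi => (hdisj hij).le_bot ⟨hi, hx⟩

theorem superlevel_subset_support {α : Type*} (f : α → ℝ) (l : ℝ≥0∞) :
    {x | l < ENNReal.ofReal |f x|} ⊆ f.support := fun x hx hfx => by
  simp [show f x = 0 from hfx] at hx

section Superlevel

variable {α ι : Type*} [MeasurableSpace α] {μ : Measure α}

theorem measurableSet_superlevel_ofReal_abs {f : α → ℝ} (hf : Measurable f) (l : ℝ≥0∞) :
    MeasurableSet {x | l < ENNReal.ofReal |f x|} :=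
  measurableSet_lt measurable_const (ENNReal.measurable_ofReal.comp hf.abs)

theorem sum_measure_superlevel_le_of_disjoint_support [Fintype ι] {f : ι → α → ℝ}
    (hf : ∀ j, Measurable (f j))
    (hdisj : Pairwise fun i j => Disjoint (f i).support (f j).support) (l : ℝ≥0∞) :
    ∑ j, μ {x | l < ENNReal.ofReal |f j x|} ≤ μ {x | l < ENNReal.ofReal |∑ j, f j x|} := by
  have hunion : (⋃ j, {x | l < ENNReal.ofReal |f j x|}) ⊆
      {x | l < ENNReal.ofReal |∑ j, f j x|} := by
    refine iUnion_subset fun j x hx => ?_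
    have hsum := Finset.sum_apply_eq_of_mem_support hdisj (superlevel_subset_support _ l hx)
    simpa only [mem_ofPred_eq, hsum] using hx
  calc ∑ j, μ {x | l < ENNReal.ofReal |f j x|}
      = μ (⋃ j, {x | l < ENNReal.ofReal |f j x|}) := by
        rw [measure_iUnion (fun i j hij => (hdisj hij).mono (superlevel_subset_support _ l)
          (superlevel_subset_support _ l)) fun j => measurableSet_superlevel_ofReal_abs (hf j) l,
          tsum_fintype]
    _ ≤ _ := measure_mono hunion

end Superlevel

theorem rearr_sum_disjoint_ge_general {α : Type*} [MeasurableSpace α] (μ : Measure α)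
    (N : ℕ) (hN : 0 < N) (f : Fin N → α → ℝ) (hf : ∀ j, Measurable (f j))
    (hdisj : Pairwise fun i j => Disjoint (Function.support (f i)) (Function.support (f j)))
    (t : ℝ) :
    (⨅ j, rearr μ (f j) t) ≤ rearr μ (fun x => ∑ j, f j x) (N * t) := by
  refine le_sInf fun l (hl : μ _ ≤ _) => ?_
  obtain ⟨j, -, hj⟩ := ENNReal.exists_le_of_sum_le (Finset.univ_nonempty_iff.mpr ⟨⟨0, hN⟩⟩)
    (f := fun j => μ {x | l < ENNReal.ofReal |f j x|}) (g := fun _ => ENNReal.ofReal t) <| by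
      calc ∑ j, μ {x | l < ENNReal.ofReal |f j x|}
          ≤ μ {x | l < ENNReal.ofReal |∑ j, f j x|} :=
            sum_measure_superlevel_le_of_disjoint_support hf hdisj l
        _ ≤ ENNReal.ofReal (N * t) := hl
        _ = ∑ _j : Fin N, ENNReal.ofReal t := by
            simp [ENNReal.ofReal_mul (Nat.cast_nonneg N)]
  exact (iInf_le _ j).trans (sInf_le hj)

/-- For functions `f₁, …, f_N` with pairwise disjoint supports,
`(∑ⱼ fⱼ)*(N t) ≥ min_j fⱼ*(t)` for every `t > 0`. -/
theorem rearr_sum_disjoint_ge {α : Type*} [MeasurableSpace α] (μ : Measure α) [SigmaFinite μ]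
    (N : ℕ) (hN : 0 < N) (f : Fin N → α → ℝ) (hf : ∀ j, Measurable (f j))
    (hdisj : Pairwise fun i j => Disjoint (Function.support (f i)) (Function.support (f j)))
    (t : ℝ) (ht : 0 < t) :
    (⨅ j, rearr μ (f j) t) ≤ rearr μ (fun x => ∑ j, f j x) (N * t) :=
  rearr_sum_disjoint_ge_general μ N hN f hf hdisj t
end

section
/- Let (R, μ) be a measure space and X a quasinormed space of measurable functions with X ⊆ L^∞(R, μ), and let I : X → L^∞(R, μ) be the embedding. Let r ∈ (0, ‖I‖] and suppose that for every ℓ ∈ ℕ there exist functions f₁, ..., f_ℓ in the closed unit ball of X with pairwise disjoint supports such that ‖fᵢ − fⱼ‖_X ≤ 1 for all i ≠ j and ‖fᵢ‖_{L^∞} > r for all i. Then the ball measure of noncompactness of I satisfies α(I) ≥ r. -/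
open MeasureTheory Set
open scoped ENNReal

/-- A quasinorm on a real vector space, with quasi-triangle constant `C`. -/
structure IsQuasinorm {E : Type*} [AddCommGroup E] [Module ℝ E] (N : E → ℝ) (C : ℝ) : Prop where
  nonneg : ∀ x, 0 ≤ N x
  smul : ∀ (a : ℝ) (x : E), N (a • x) = |a| * N x
  eq_zero_iff : ∀ x, N x = 0 ↔ x = 0
  triangle : ∀ x y, N (x + y) ≤ C * (N x + N y)

/-- The `L^∞(μ)` norm of a function, as an extended nonnegative real. -/
noncomputable def einorm {α : Type*} [MeasurableSpace α] (μ : Measure α) (f : α → ℝ) : ℝ≥0∞ :=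
  essSup (fun x => ENNReal.ofReal |f x|) μ

/-- Lower bound for the ball measure of noncompactness of an embedding of a quasinormed
function space `X` into `L^∞(μ)`: if for every `ℓ` there are `ℓ` functions in `B_X` with
pairwise disjoint supports, pairwise `X`-distances at most `1`, and `L^∞` norms exceeding
`r`, then no covering of `I(B_X)` by finitely many `L^∞`-balls of radius `ρ < r` exists,
i.e. `α(I) ≥ r`. -/
theorem bmc_embedding_into_Linfty_ge {α E : Type*} [MeasurableSpace α] (μ : Measure α)
    [AddCommGroup E] [Module ℝ E] (N : E → ℝ) (CE : ℝ) (hN : IsQuasinorm N CE)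
    (J : E →ₗ[ℝ] (α → ℝ)) (hsub : ∀ x : E, einorm μ (J x) < ⊤)
    (r : ℝ) (hr : 0 < r)
    (hrI : r ≤ sSup {c : ℝ | ∃ x, N x ≤ 1 ∧ c = (einorm μ (J x)).toReal})
    (hmain : ∀ ℓ : ℕ, ∃ f : Fin ℓ → E,
      (∀ i, N (f i) ≤ 1) ∧
      (Pairwise fun i j => Disjoint (Function.support (J (f i))) (Function.support (J (f j)))) ∧
      (∀ i j, i ≠ j → N (f i - f j) ≤ 1) ∧
      (∀ i, ENNReal.ofReal r < einorm μ (J (f i)))) :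
    ∀ ρ : ℝ, 0 < ρ →
      (∃ s : Finset (α → ℝ), ∀ x : E, N x ≤ 1 →
        ∃ g ∈ s, einorm μ (J x - g) ≤ ENNReal.ofReal ρ) →
      r ≤ ρ := by
  classical
  intro ρ hρ hcov
  obtain ⟨s, hs⟩ := hcov
  by_contra hlt
  push_neg at hlt
  set m := s.card with hm
  obtain ⟨f, hf1, hf2, hf3, hf4⟩ := hmain (4 ^ m + 1)
  have hT : ∀ i j : Fin (4 ^ m + 1), ∃ g : α → ℝ,
      i ≠ j → g ∈ s ∧ einorm μ (J (f i - f j) - g) ≤ ENNReal.ofReal ρ := by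
    intro i j
    by_cases h : i = j
    · exact ⟨0, fun hne => absurd h hne⟩
    · obtain ⟨g, hg, hgle⟩ := hs (f i - f j) (hf3 i j h)
      exact ⟨g, fun _ => ⟨hg, hgle⟩⟩
  choose T hTs using hT
  set In : Fin (4 ^ m + 1) → Finset (α → ℝ) :=
    fun j => s.filter (fun g => ∃ i, i ≠ j ∧ T i j = g) with hIn
  set Out : Fin (4 ^ m + 1) → Finset (α → ℝ) :=
    fun j => s.filter (fun g => ∃ i, i ≠ j ∧ T j i = g) with hOut
  have hmaps : ∀ j ∈ (Finset.univ : Finset (Fin (4 ^ m + 1))),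
      (In j, Out j) ∈ s.powerset ×ˢ s.powerset := by
    intro j _
    simp only [Finset.mem_product, Finset.mem_powerset]
    exact ⟨Finset.filter_subset _ _, Finset.filter_subset _ _⟩
  have hcard : (s.powerset ×ˢ s.powerset).card <
      (Finset.univ : Finset (Fin (4 ^ m + 1))).card := by
    rw [Finset.card_product, Finset.card_powerset, Finset.card_univ, Fintype.card_fin, ← hm]
    have : 2 ^ m * 2 ^ m = 4 ^ m := by
      rw [← mul_pow]; norm_num
    rw [this]
    omega
  obtain ⟨j, _, j', _, hjj', heq⟩ :=
    Finset.exists_ne_map_eq_of_card_lt_of_maps_to hcard hmaps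
  have hInEq : In j = In j' := congrArg Prod.fst heq
  have hOutEq : Out j = Out j' := congrArg Prod.snd heq
  obtain ⟨hgs, hgv⟩ := hTs j j' hjj'
  set g : α → ℝ := T j j' with hg
  have hgIn : g ∈ In j := by
    rw [hInEq, hIn]
    simp only [Finset.mem_filter]
    exact ⟨hgs, j, hjj', rfl⟩
  rw [hIn] at hgIn
  simp only [Finset.mem_filter] at hgIn
  obtain ⟨-, i, hij, hTij⟩ := hgIn
  have hgu : einorm μ (J (f i - f j) - g) ≤ ENNReal.ofReal ρ := by
    rw [← hTij]; exact (hTs i j hij).2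
  -- a.e. pointwise bounds
  have hau : ∀ᵐ x ∂μ, ENNReal.ofReal |(J (f i - f j) - g) x| ≤ ENNReal.ofReal ρ := by
    filter_upwards [ae_le_essSup (μ := μ)
      (f := fun x => ENNReal.ofReal |(J (f i - f j) - g) x|)] with x hx
    exact hx.trans hgu
  have hav : ∀ᵐ x ∂μ, ENNReal.ofReal |(J (f j - f j') - g) x| ≤ ENNReal.ofReal ρ := by
    filter_upwards [ae_le_essSup (μ := μ)
      (f := fun x => ENNReal.ofReal |(J (f j - f j') - g) x|)] with x hx
    exact hx.trans hgv
  have hdisj_i : Disjoint (Function.support (J (f i))) (Function.support (J (f j))) :=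
    hf2 hij
  have hdisj_j' : Disjoint (Function.support (J (f j'))) (Function.support (J (f j))) :=
    hf2 (Ne.symm hjj')
  have hkey : ∀ᵐ x ∂μ, ENNReal.ofReal |J (f j) x| ≤ ENNReal.ofReal ρ := by
    filter_upwards [hau, hav] with x h1 h2
    by_cases hx0 : J (f j) x = 0
    · simp [hx0, hρ.le]
    · have hxsupp : x ∈ Function.support (J (f j)) := hx0
      have hix : J (f i) x = 0 := by
        by_contra hc
        exact (Set.disjoint_left.mp hdisj_i hc) hxsupp
      have hjx : J (f j') x = 0 := by
        by_contra hc
        exact (Set.disjoint_left.mp hdisj_j' hc) hxsupp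
      have h1' : |J (f i) x - J (f j) x - g x| ≤ ρ := by
        have := (ENNReal.ofReal_le_ofReal_iff hρ.le).mp h1
        simpa [map_sub] using this
      have h2' : |J (f j) x - J (f j') x - g x| ≤ ρ := by
        have := (ENNReal.ofReal_le_ofReal_iff hρ.le).mp h2
        simpa [map_sub] using this
      rw [hix] at h1'
      rw [hjx] at h2'
      simp only [sub_zero] at h2'
      have habs : |J (f j) x| ≤ ρ := by
        have ha := abs_sub_abs_le_abs_sub (J (f j) x - g x) (0 - (J (f j) x) - g x)
        have hb := abs_sub (J (f j) x - g x) (0 - (J (f j) x) - g x)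
        cases abs_cases (J (f j) x - g x) with
        | inl h => cases abs_cases (0 - (J (f j) x) - g x) with
          | inl h' => cases abs_cases (J (f j) x) with
            | inl h'' => linarith [h.1, h'.1, h''.1, h1', h2']
            | inr h'' => linarith [h.1, h'.1, h''.1, h1', h2']
          | inr h' => cases abs_cases (J (f j) x) with
            | inl h'' => linarith [h.1, h'.1, h''.1, h1', h2']
            | inr h'' => linarith [h.1, h'.1, h''.1, h1', h2']
        | inr h => cases abs_cases (0 - (J (f j) x) - g x) with
          | inl h' => cases abs_cases (J (f j) x) with
            | inl h'' => linarith [h.1, h'.1, h''.1, h1', h2']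
            | inr h'' => linarith [h.1, h'.1, h''.1, h1', h2']
          | inr h' => cases abs_cases (J (f j) x) with
            | inl h'' => linarith [h.1, h'.1, h''.1, h1', h2']
            | inr h'' => linarith [h.1, h'.1, h''.1, h1', h2']
      exact ENNReal.ofReal_le_ofReal habs
  have hle : einorm μ (J (f j)) ≤ ENNReal.ofReal ρ :=
    essSup_le_of_ae_le _ hkey
  have hgt := hf4 j
  have : ENNReal.ofReal r < ENNReal.ofReal r :=
    lt_of_lt_of_le hgt (hle.trans (le_of_lt ((ENNReal.ofReal_lt_ofReal_iff hr).mpr hlt)))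
  exact lt_irrefl _ this
end
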